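/- arXiv:2504.03493 — 2 statements merged into one kernel-verified Lean document; each statement's English description precedes it below -/
import Mathlib

section
/- Let u be a tempered generalized stochastic process on ℝᵈ and let μ : ℝᵈ → [0,∞) be continuous and polynomially bounded, with E( (u,φ)·conj((u,ψ)) ) = ∫_{ℝᵈ} 𝓕ψ(ξ)·conj(𝓕φ(ξ))·μ(ξ) dξ for all φ, ψ ∈ 𝒮(ℝᵈ;ℂ) (u is stationary with spectral density μ). Then for all f, g ∈ 𝒮(ℝᵈ;ℂ): E( (u,f)·conj((u,g)) ) = (2π)^{-d/2} ∫_{ℝ²ᵈ} μ(ξ)·conj( W(f,g)(x,ξ) ) dx dξ; that is, the Wigner spectrum of u equals (2π)^{-d/2}·(1 ⊗ μ). -/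
/-!
Integrating the cross-Wigner distribution in `x` gives its frequency marginal: after the
substitution `y = 2 (t - x)` the `x`-integral becomes the integral of a convolution, so that
`(2π)^{-d/2} ∫ W(f,g)(x,ξ) dx = 𝓕f(ξ) conj (𝓕g(ξ))`. Exchanging the order of integration, the
right-hand side is therefore `∫ 𝓕g(ξ) conj (𝓕f(ξ)) μ(ξ) dξ`, which is `E((u,f) conj (u,g))` by
stationarity.

The exchange needs `μ(ξ) W(f,g)(x,ξ)` to be integrable on `ℝ²ᵈ`, i.e. joint rapid decay of
`W(f,g)`. The slices `y ↦ f(x + y/2) conj (g(x - y/2))` are Schwartz functions all of whose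
seminorms decay rapidly in `x`, since `|x|` and `|y|` are bounded by `|x + y/2| + |x - y/2|`.
Weighted by `(1 + |x|)^K` they form a bounded subset of `𝓢`, which the (continuous) Fourier
transform maps to a bounded subset again; `W(f,g)(x, ·)` is the Fourier transform of the slice.
-/

open MeasureTheory ComplexConjugate SchwartzMap
open scoped FourierTransform

noncomputable section

/-- `ℝᵈ` as a Euclidean space. -/
abbrev Ed (d : ℕ) := EuclideanSpace ℝ (Fin d)

/-- The Fourier transform of a Schwartz function, normalized as
`𝓕 φ (ξ) = (2π)^{-d/2} ∫ φ(x) e^{-i⟨x,ξ⟩} dx`. -/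
def ftInt {d : ℕ} (φ : SchwartzMap (Ed d) ℂ) (ξ : Ed d) : ℂ :=
  (((2 * Real.pi) ^ (-(d : ℝ) / 2) : ℝ) : ℂ) *
    ∫ x : Ed d, φ x * Complex.exp (-((inner ℝ x ξ : ℝ) : ℂ) * Complex.I)

/-- The cross-Wigner distribution of two Schwartz functions on `ℝᵈ`:
`W(f,g)(x,ξ) = (2π)^{-d/2} ∫ f(x+y/2) conj(g(x−y/2)) e^{-i⟨y,ξ⟩} dy`. -/
def wig {d : ℕ} (f g : SchwartzMap (Ed d) ℂ) (x ξ : Ed d) : ℂ :=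
  (((2 * Real.pi) ^ (-(d : ℝ) / 2) : ℝ) : ℂ) *
    ∫ y : Ed d, f (x + (2 : ℝ)⁻¹ • y) * conj (g (x - (2 : ℝ)⁻¹ • y)) *
      Complex.exp (-((inner ℝ y ξ : ℝ) : ℂ) * Complex.I)

section InnerProductSpace

variable {V : Type*} [NormedAddCommGroup V] [InnerProductSpace ℝ V]

theorem exp_neg_inner_mul_conj_exp_neg_inner (a b ξ : V) :
    Complex.exp (-((inner ℝ a ξ : ℝ) : ℂ) * Complex.I) *
        conj (Complex.exp (-((inner ℝ b ξ : ℝ) : ℂ) * Complex.I)) =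
      Complex.exp (-((inner ℝ (a - b) ξ : ℝ) : ℂ) * Complex.I) := by
  rw [← Complex.exp_conj, ← Complex.exp_add, inner_sub_left]
  simp only [map_mul, map_neg, Complex.conj_ofReal, Complex.conj_I, Complex.ofReal_sub]
  ring_nf

variable [FiniteDimensional ℝ V] [MeasurableSpace V] [BorelSpace V]

theorem integral_mul_exp_neg_inner_eq_fourier (h : V → ℂ) (ξ : V) :
    ∫ y, h y * Complex.exp (-((inner ℝ y ξ : ℝ) : ℂ) * Complex.I) =
      𝓕 h ((2 * Real.pi)⁻¹ • ξ) := by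
  rw [Real.fourier_eq']
  congr 1 with y
  rw [smul_eq_mul, mul_comm, real_inner_smul_right]
  congr 2
  push_cast
  field_simp

end InnerProductSpace

section HaarIntegrals

variable {E : Type*} [NormedAddCommGroup E] [NormedSpace ℝ E] [FiniteDimensional ℝ E]
  [MeasurableSpace E] [BorelSpace E] (μ : Measure E) [μ.IsAddHaarMeasure]

theorem integrable_inv_one_add_norm_pow {n : ℕ} (hn : Module.finrank ℝ E < n) :
    Integrable (fun x : E => ((1 + ‖x‖) ^ n)⁻¹) μ := by
  refine (integrable_one_add_norm (μ := μ) (r := n) (mod_cast hn)).congr (ae_of_all _ fun x => ?_)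
  dsimp only
  rw [Real.rpow_neg (by positivity), Real.rpow_natCast]

theorem integral_integral_mul_conj_comp_add_sub {P Q : E → ℂ} (hP : Integrable P μ)
    (hQ : Integrable Q μ) :
    ∫ x, ∫ y, P (x + (2 : ℝ)⁻¹ • y) * conj (Q (x - (2 : ℝ)⁻¹ • y)) ∂μ ∂μ =
      (∫ x, P x ∂μ) * conj (∫ x, Q x ∂μ) := by
  set c : ℝ := 2 ^ Module.finrank ℝ E
  -- substitute `y = 2 (t - x)` in the inner integral
  have hinner : ∀ x, ∫ y, P (x + (2 : ℝ)⁻¹ • y) * conj (Q (x - (2 : ℝ)⁻¹ • y)) ∂μ =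
      c • convolution P (fun t => conj (Q t)) (ContinuousLinearMap.mul ℂ ℂ) μ ((2 : ℝ) • x) := by
    intro x
    rw [Measure.integral_comp_smul μ (fun z => P (x + z) * conj (Q (x - z))) (2 : ℝ)⁻¹,
      convolution_def]
    simp only [ContinuousLinearMap.mul_apply', c, inv_pow, inv_inv, abs_pow, abs_two]
    rw [← integral_add_left_eq_self (fun t => P t * conj (Q ((2 : ℝ) • x - t))) x]
    congr 2 with z
    rw [show (2 : ℝ) • x - (x + z) = x - z by module]
  have hc : c ≠ 0 := by positivity
  have hQ' : Integrable (fun t => conj (Q t)) μ := (Complex.conjCLE : ℂ →L[ℝ] ℂ).integrable_comp hQ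
  rw [integral_congr_ae (ae_of_all _ hinner), integral_smul, Measure.integral_comp_smul,
    integral_convolution _ hP hQ', smul_smul]
  simp [c, integral_conj, hc]

end HaarIntegrals

section WignerSlice

open scoped ContDiff

variable {E F : Type*} [NormedAddCommGroup E] [NormedSpace ℝ E]
  [NormedAddCommGroup F] [NormedSpace ℝ F]

theorem norm_iteratedFDeriv_comp_add_clm_le {f : E → F} (hf : ContDiff ℝ ∞ f) (x : E)
    {L : E →L[ℝ] E} (hL : ‖L‖ ≤ 1) (n : ℕ) (y : E) :
    ‖iteratedFDeriv ℝ n (fun w => f (x + L w)) y‖ ≤ ‖iteratedFDeriv ℝ n f (x + L y)‖ := by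
  have hcomp : (fun w => f (x + L w)) = (fun z => f (x + z)) ∘ L := rfl
  have hfx : ContDiff ℝ ∞ fun z => f (x + z) := hf.comp (contDiff_const.add contDiff_id)
  rw [hcomp, L.iteratedFDeriv_comp_right hfx y (mod_cast le_top), iteratedFDeriv_comp_add_left]
  refine (ContinuousMultilinearMap.norm_compContinuousLinearMap_le _ _).trans ?_
  exact mul_le_of_le_one_right (norm_nonneg _)
    (Finset.prod_le_one (fun _ _ => norm_nonneg _) fun _ _ => hL)

theorem one_add_norm_pow_mul_norm_pow_le (x y : E) (K k : ℕ) :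
    (1 + ‖x‖) ^ K * ‖y‖ ^ k ≤
      (1 + ‖x + (2 : ℝ)⁻¹ • y‖) ^ (K + k) * (1 + ‖x - (2 : ℝ)⁻¹ • y‖) ^ (K + k) := by
  set a := x + (2 : ℝ)⁻¹ • y
  set b := x - (2 : ℝ)⁻¹ • y
  have hx : ‖x‖ ≤ ‖a‖ + ‖b‖ := by
    have : x = (2 : ℝ)⁻¹ • (a + b) := by simp only [a, b]; module
    rw [this, norm_smul, Real.norm_of_nonneg (by norm_num)]
    linarith [norm_add_le a b, norm_nonneg (a + b)]
  have hy : ‖y‖ ≤ ‖a‖ + ‖b‖ := by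
    have : y = a - b := by simp only [a, b]; module
    exact this ▸ norm_sub_le a b
  have ha := norm_nonneg a
  have hb := norm_nonneg b
  rw [← mul_pow, pow_add]
  gcongr <;> nlinarith

theorem norm_iteratedFDeriv_wignerSlice_le {f g : E → ℂ} (hf : ContDiff ℝ ∞ f)
    (hg : ContDiff ℝ ∞ g) (x y : E) (n : ℕ) :
    ‖iteratedFDeriv ℝ n (fun w => f (x + (2 : ℝ)⁻¹ • w) * conj (g (x - (2 : ℝ)⁻¹ • w))) y‖ ≤
      ∑ i ∈ Finset.range (n + 1), (n.choose i : ℝ) *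
        ‖iteratedFDeriv ℝ i f (x + (2 : ℝ)⁻¹ • y)‖ *
        ‖iteratedFDeriv ℝ (n - i) g (x - (2 : ℝ)⁻¹ • y)‖ := by
  set L : E →L[ℝ] E := (2 : ℝ)⁻¹ • ContinuousLinearMap.id ℝ E
  have hL : ‖L‖ ≤ 1 := (ContinuousLinearMap.opNorm_smul_le _ _).trans <| by
    grw [ContinuousLinearMap.norm_id_le]; norm_num
  have hnegL : ‖-L‖ ≤ 1 := by rwa [norm_neg]
  have hfun : (fun w => f (x + (2 : ℝ)⁻¹ • w) * conj (g (x - (2 : ℝ)⁻¹ • w))) =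
      fun w => f (x + L w) * (Complex.conjLIE ∘ fun w => g (x + (-L) w)) w := by
    funext w; simp [L, sub_eq_add_neg]
  have hu : ContDiff ℝ ∞ fun w => f (x + L w) := hf.comp (contDiff_const.add L.contDiff)
  have hv : ContDiff ℝ ∞ (Complex.conjLIE ∘ fun w => g (x + (-L) w)) :=
    Complex.conjLIE.contDiff.comp (hg.comp (contDiff_const.add (-L).contDiff))
  rw [hfun]
  refine (norm_iteratedFDeriv_mul_le hu hv y (mod_cast le_top)).trans ?_
  gcongr with i
  · exact norm_iteratedFDeriv_comp_add_clm_le hf x hL i y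
  · have hb : x - (2 : ℝ)⁻¹ • y = x + (-L) y := by simp [L, sub_eq_add_neg]
    rw [LinearIsometryEquiv.norm_iteratedFDeriv_comp_left, hb]
    exact norm_iteratedFDeriv_comp_add_clm_le hg x hnegL (n - i) y

theorem exists_bound_weighted_iteratedFDeriv_wignerSlice (f g : 𝓢(E, ℂ)) (K k n : ℕ) :
    ∃ C, 0 ≤ C ∧ ∀ x y : E, (1 + ‖x‖) ^ K * (‖y‖ ^ k * ‖iteratedFDeriv ℝ n
      (fun w => f (x + (2 : ℝ)⁻¹ • w) * conj (g (x - (2 : ℝ)⁻¹ • w))) y‖) ≤ C := by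
  set m := K + k
  set S : 𝓢(E, ℂ) → ℝ := fun h => 2 ^ m * (Finset.Iic (m, n)).sup
    (fun p => SchwartzMap.seminorm ℝ p.1 p.2) h
  refine ⟨∑ i ∈ Finset.range (n + 1), (n.choose i : ℝ) * S f * S g, by positivity, fun x y => ?_⟩
  set a := x + (2 : ℝ)⁻¹ • y
  set b := x - (2 : ℝ)⁻¹ • y
  calc _ ≤ (1 + ‖a‖) ^ m * (1 + ‖b‖) ^ m * ∑ i ∈ Finset.range (n + 1), (n.choose i : ℝ) *
        ‖iteratedFDeriv ℝ i f a‖ * ‖iteratedFDeriv ℝ (n - i) g b‖ := by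
        rw [← mul_assoc]
        exact mul_le_mul (one_add_norm_pow_mul_norm_pow_le x y K k)
          (norm_iteratedFDeriv_wignerSlice_le (f.smooth ⊤) (g.smooth ⊤) x y n)
          (by positivity) (by positivity)
    _ = ∑ i ∈ Finset.range (n + 1), (n.choose i : ℝ) *
        ((1 + ‖a‖) ^ m * ‖iteratedFDeriv ℝ i f a‖) *
        ((1 + ‖b‖) ^ m * ‖iteratedFDeriv ℝ (n - i) g b‖) := by
        rw [Finset.mul_sum]
        exact Finset.sum_congr rfl fun _ _ => by ring
    _ ≤ _ := by
        gcongr with i hi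
        · exact one_add_le_sup_seminorm_apply (m := (m, n)) le_rfl
            (Nat.lt_succ_iff.mp (Finset.mem_range.mp hi)) f a
        · exact one_add_le_sup_seminorm_apply (m := (m, n)) le_rfl (Nat.sub_le n i) g b

def wignerSlice (f g : 𝓢(E, ℂ)) (x : E) : 𝓢(E, ℂ) where
  toFun y := f (x + (2 : ℝ)⁻¹ • y) * conj (g (x - (2 : ℝ)⁻¹ • y))
  smooth' := ((f.smooth ⊤).comp (contDiff_const.add (contDiff_id.const_smul _))).mul
    (Complex.conjLIE.contDiff.comp
      ((g.smooth ⊤).comp (contDiff_const.sub (contDiff_id.const_smul _))))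
  decay' k n := by
    obtain ⟨C, -, hC⟩ := exists_bound_weighted_iteratedFDeriv_wignerSlice f g 0 k n
    exact ⟨C, fun y => by simpa using hC x y⟩

theorem isVonNBounded_range_smul_wignerSlice (f g : 𝓢(E, ℂ)) (K : ℕ) :
    Bornology.IsVonNBounded ℝ (Set.range fun x : E => (1 + ‖x‖) ^ K • wignerSlice f g x) := by
  rw [(schwartz_withSeminorms ℝ E ℂ).isVonNBounded_iff_seminorm_bddAbove]
  rintro ⟨k, n⟩
  obtain ⟨C, hC0, hC⟩ := exists_bound_weighted_iteratedFDeriv_wignerSlice f g K k n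
  refine ⟨C, Set.forall_mem_image.2 ?_⟩
  rintro _ ⟨x, rfl⟩
  have hx : (0 : ℝ) < (1 + ‖x‖) ^ K := by positivity
  rw [schwartzSeminormFamily_apply, map_smul_eq_mul, Real.norm_of_nonneg hx.le,
    ← le_div_iff₀' hx]
  refine seminorm_le_bound ℝ k n _ (by positivity) fun y => ?_
  rw [le_div_iff₀' hx]
  exact hC x y

end WignerSlice

section Fourier

variable {V : Type*} [NormedAddCommGroup V] [InnerProductSpace ℝ V] [FiniteDimensional ℝ V]
  [MeasurableSpace V] [BorelSpace V]

theorem exists_bound_fourier_wignerSlice (f g : 𝓢(V, ℂ)) (K M : ℕ) :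
    ∃ C, ∀ x w : V, (1 + ‖x‖) ^ K * (1 + ‖w‖) ^ M * ‖𝓕 (wignerSlice f g x : V → ℂ) w‖ ≤ C := by
  have hB := (isVonNBounded_range_smul_wignerSlice f g K).image
    (fourierTransformCLM ℝ : 𝓢(V, ℂ) →L[ℝ] 𝓢(V, ℂ))
  obtain ⟨r, -, hr⟩ := (schwartz_withSeminorms ℝ V ℂ).isVonNBounded_iff_finset_seminorm_bounded.1
    hB (Finset.Iic (M, 0))
  refine ⟨2 ^ M * r, fun x w => ?_⟩
  have hx : (0 : ℝ) ≤ (1 + ‖x‖) ^ K := by positivity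
  have hFx : ‖iteratedFDeriv ℝ 0
      (fourierTransformCLM ℝ ((1 + ‖x‖) ^ K • wignerSlice f g x) : V → ℂ) w‖ =
      (1 + ‖x‖) ^ K * ‖𝓕 (wignerSlice f g x : V → ℂ) w‖ := by
    rw [norm_iteratedFDeriv_zero, map_smul, smul_apply, norm_smul, Real.norm_of_nonneg hx,
      fourierTransformCLM_apply, fourier_coe]
  calc _ = (1 + ‖w‖) ^ M * ‖iteratedFDeriv ℝ 0
        (fourierTransformCLM ℝ ((1 + ‖x‖) ^ K • wignerSlice f g x) : V → ℂ) w‖ := by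
        rw [hFx]; ring
    _ ≤ _ := one_add_le_sup_seminorm_apply (m := (M, 0)) le_rfl le_rfl _ w
    _ ≤ 2 ^ M * r := by gcongr; exact (hr _ ⟨_, ⟨x, rfl⟩, rfl⟩).le

end Fourier

section Wigner

variable {d : ℕ}

theorem wig_eq_fourier_wignerSlice (f g : 𝓢(Ed d, ℂ)) (x ξ : Ed d) :
    wig f g x ξ = (((2 * Real.pi) ^ (-(d : ℝ) / 2) : ℝ) : ℂ) *
      𝓕 (wignerSlice f g x : Ed d → ℂ) ((2 * Real.pi)⁻¹ • ξ) := by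
  rw [wig, ← integral_mul_exp_neg_inner_eq_fourier]
  rfl

theorem exists_bound_wig (f g : 𝓢(Ed d, ℂ)) (K M : ℕ) :
    ∃ C, ∀ x ξ : Ed d, (1 + ‖x‖) ^ K * (1 + ‖ξ‖) ^ M * ‖wig f g x ξ‖ ≤ C := by
  obtain ⟨C, hC⟩ := exists_bound_fourier_wignerSlice f g K M
  set c : ℝ := (2 * Real.pi) ^ (-(d : ℝ) / 2)
  have hc : 0 < c := by positivity
  refine ⟨c * (2 * Real.pi) ^ M * C, fun x ξ => ?_⟩
  set w : Ed d := (2 * Real.pi)⁻¹ • ξ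
  have hξ : 1 + ‖ξ‖ ≤ 2 * Real.pi * (1 + ‖w‖) := by
    have : ‖ξ‖ = 2 * Real.pi * ‖w‖ := by
      rw [norm_smul, Real.norm_of_nonneg (by positivity), ← mul_assoc,
        mul_inv_cancel₀ (by positivity), one_mul]
    nlinarith [Real.pi_gt_three]
  rw [wig_eq_fourier_wignerSlice, norm_mul, Complex.norm_real, Real.norm_of_nonneg hc.le]
  calc _ ≤ (1 + ‖x‖) ^ K * (2 * Real.pi * (1 + ‖w‖)) ^ M *
        (c * ‖𝓕 (wignerSlice f g x : Ed d → ℂ) w‖) := by gcongr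
    _ = c * (2 * Real.pi) ^ M *
        ((1 + ‖x‖) ^ K * (1 + ‖w‖) ^ M * ‖𝓕 (wignerSlice f g x : Ed d → ℂ) w‖) := by
      rw [mul_pow]; ring
    _ ≤ _ := by gcongr; exact hC x w

theorem stronglyMeasurable_uncurry_wig (f g : 𝓢(Ed d, ℂ)) :
    StronglyMeasurable (Function.uncurry (wig f g)) := by
  have hcont : Continuous fun q : (Ed d × Ed d) × Ed d =>
      f (q.1.1 + (2 : ℝ)⁻¹ • q.2) * conj (g (q.1.1 - (2 : ℝ)⁻¹ • q.2)) *
        Complex.exp (-((inner ℝ q.2 q.1.2 : ℝ) : ℂ) * Complex.I) := by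
    fun_prop
  exact hcont.stronglyMeasurable.integral_prod_right'.const_mul _

theorem integrable_mul_conj_wig (f g : 𝓢(Ed d, ℂ)) {μ : Ed d → ℝ} (hμ : Measurable μ)
    {C : ℝ} {N : ℕ} (hμb : ∀ ξ, |μ ξ| ≤ C * (1 + ‖ξ‖) ^ N) :
    Integrable (Function.uncurry fun x ξ => (μ ξ : ℂ) * conj (wig f g x ξ))
      (volume.prod volume) := by
  obtain ⟨B, hB⟩ := exists_bound_wig f g (d + 1) (N + (d + 1))
  have hdecay : ∀ y : Ed d, 0 < (1 + ‖y‖) ^ (d + 1) := fun y => by positivity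
  have hC : 0 ≤ C := nonneg_of_mul_nonneg_left ((abs_nonneg _).trans (hμb 0)) (by positivity)
  have hint : Module.finrank ℝ (Ed d) < d + 1 := by simp
  have hdom := ((integrable_inv_one_add_norm_pow volume hint).mul_prod
    (integrable_inv_one_add_norm_pow volume hint)).const_mul (C * B)
  refine hdom.mono' ?_ (ae_of_all _ fun ⟨x, ξ⟩ => ?_)
  · exact ((Complex.measurable_ofReal.comp (hμ.comp measurable_snd)).aestronglyMeasurable).mul
      (Complex.continuous_conj.comp_stronglyMeasurable
        (stronglyMeasurable_uncurry_wig f g)).aestronglyMeasurable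
  simp only [Function.uncurry_apply_pair, norm_mul, Complex.norm_real, Real.norm_eq_abs,
    RCLike.norm_conj]
  rw [← mul_inv, ← div_eq_mul_inv, le_div_iff₀ (mul_pos (hdecay x) (hdecay ξ))]
  calc _ ≤ C * (1 + ‖ξ‖) ^ N * ‖wig f g x ξ‖ * ((1 + ‖x‖) ^ (d + 1) * (1 + ‖ξ‖) ^ (d + 1)) := by
        gcongr; exact hμb ξ
    _ = C * ((1 + ‖x‖) ^ (d + 1) * (1 + ‖ξ‖) ^ (N + (d + 1)) * ‖wig f g x ξ‖) := by ring
    _ ≤ C * B := by gcongr; exact hB x ξ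

theorem mul_integral_wig (f g : 𝓢(Ed d, ℂ)) (ξ : Ed d) :
    (((2 * Real.pi) ^ (-(d : ℝ) / 2) : ℝ) : ℂ) * ∫ x, wig f g x ξ =
      ftInt f ξ * conj (ftInt g ξ) := by
  set e : Ed d → ℂ := fun s => Complex.exp (-((inner ℝ s ξ : ℝ) : ℂ) * Complex.I)
  have he : ∀ s, ‖e s‖ = 1 := fun s => by simp [e, Complex.norm_exp]
  have hint : ∀ h : 𝓢(Ed d, ℂ), Integrable (fun s => h s * e s) :=
    fun h => h.integrable.mul_bdd (by fun_prop) (ae_of_all _ fun s => (he s).le)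
  have hwig : ∀ x, wig f g x ξ = (((2 * Real.pi) ^ (-(d : ℝ) / 2) : ℝ) : ℂ) *
      ∫ y, f (x + (2 : ℝ)⁻¹ • y) * e (x + (2 : ℝ)⁻¹ • y) *
        conj (g (x - (2 : ℝ)⁻¹ • y) * e (x - (2 : ℝ)⁻¹ • y)) := by
    intro x
    rw [wig]
    congr 2 with y
    simp only [e]
    rw [map_mul, mul_mul_mul_comm, exp_neg_inner_mul_conj_exp_neg_inner,
      show x + (2 : ℝ)⁻¹ • y - (x - (2 : ℝ)⁻¹ • y) = y by module]
  simp_rw [hwig, integral_const_mul]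
  rw [integral_integral_mul_conj_comp_add_sub volume (hint f) (hint g)]
  simp only [ftInt, map_mul, Complex.conj_ofReal, e]
  ring

end Wigner

theorem stmt8_general {Ω : Type} [MeasurableSpace Ω] (P : Measure Ω) [IsProbabilityMeasure P]
    {d : ℕ} (u : SchwartzMap (Ed d) ℂ →L⋆[ℂ] Lp ℂ 2 P)
    (μ : Ed d → ℝ) (hμc : Continuous μ)
    (hμb : ∃ C > 0, ∃ N : ℕ, ∀ ξ : Ed d, |μ ξ| ≤ C * (1 + ‖ξ‖) ^ N)
    -- `u` is stationary with spectral density `μ`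
    (hstat : ∀ φ ψ : SchwartzMap (Ed d) ℂ,
      ∫ ω, u φ ω * conj (u ψ ω) ∂P =
        ∫ ξ : Ed d, ftInt ψ ξ * conj (ftInt φ ξ) * (μ ξ : ℂ)) :
    -- the Wigner spectrum of `u` equals `(2π)^{-d/2} (1 ⊗ μ)`
    ∀ f g : SchwartzMap (Ed d) ℂ,
      ∫ ω, u f ω * conj (u g ω) ∂P =
        (((2 * Real.pi) ^ (-(d : ℝ) / 2) : ℝ) : ℂ) *
          ∫ x : Ed d, ∫ ξ : Ed d, (μ ξ : ℂ) * conj (wig f g x ξ) := by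
  intro f g
  obtain ⟨C, -, N, hμN⟩ := hμb
  rw [hstat, integral_integral_swap (integrable_mul_conj_wig f g hμc.measurable hμN),
    ← integral_const_mul]
  refine integral_congr_ae (ae_of_all _ fun ξ => ?_)
  have h := congrArg conj (mul_integral_wig f g ξ)
  rw [map_mul, map_mul, Complex.conj_ofReal, Complex.conj_conj] at h
  dsimp only
  rw [integral_const_mul, integral_conj]
  linear_combination -(μ ξ : ℂ) * h

theorem stmt8 {Ω : Type} [MeasurableSpace Ω] (P : Measure Ω) [IsProbabilityMeasure P]
    {d : ℕ} (u : SchwartzMap (Ed d) ℂ →L⋆[ℂ] Lp ℂ 2 P)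
    (μ : Ed d → ℝ) (hμ0 : ∀ ξ, 0 ≤ μ ξ) (hμc : Continuous μ)
    (hμb : ∃ C > 0, ∃ N : ℕ, ∀ ξ : Ed d, |μ ξ| ≤ C * (1 + ‖ξ‖) ^ N)
    -- `u` is stationary with spectral density `μ`
    (hstat : ∀ φ ψ : SchwartzMap (Ed d) ℂ,
      ∫ ω, u φ ω * conj (u ψ ω) ∂P =
        ∫ ξ : Ed d, ftInt ψ ξ * conj (ftInt φ ξ) * (μ ξ : ℂ)) :
    -- the Wigner spectrum of `u` equals `(2π)^{-d/2} (1 ⊗ μ)`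
    ∀ f g : SchwartzMap (Ed d) ℂ,
      ∫ ω, u f ω * conj (u g ω) ∂P =
        (((2 * Real.pi) ^ (-(d : ℝ) / 2) : ℝ) : ℂ) *
          ∫ x : Ed d, ∫ ξ : Ed d, (μ ξ : ℂ) * conj (wig f g x ξ) :=
  stmt8_general P u μ hμc hμb hstat
end
end

section
/- Let x₁, x₂, ξ₁, ξ₂ ∈ ℝ satisfy 2x₁ > |ξ₂|, x₂ + ξ₁/2 ≠ 0 and x₂ − ξ₁/2 ≠ 0. Set a = (x₁ − ξ₂/2)·(x₂ + ξ₁/2) and b = (x₁ + ξ₂/2)·(x₂ − ξ₁/2). Then 4·(x₁² − ξ₂²/4)²·( sin(a)/a )²·( sin(b)/b )² = ( ( cos(x₁ξ₁ − x₂ξ₂) − cos(2x₁x₂ − ξ₁ξ₂/2) ) / ( x₂² − ξ₁²/4 ) )². (This identity expresses the Weyl symbol of the covariance operator of the zero-mean Wigner distribution of Brownian motion, σ_W(x₁,x₂,ξ₁,ξ₂) = σ_b(x₁−ξ₂/2, x₂+ξ₁/2)·σ_b(x₁+ξ₂/2, x₂−ξ₁/2) with σ_b(x,ξ) = 2x²(sin(xξ)/(xξ))²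 for x > 0, in closed form.) -/
/-! With `p = x₁ - ξ₂/2`, `q = x₁ + ξ₂/2`, `u = x₂ + ξ₁/2`, `v = x₂ - ξ₁/2` we have `a = p u`,
`b = q v`, `x₁² - ξ₂²/4 = p q`, `x₂² - ξ₁²/4 = u v`, and the two cosine arguments are `a - b` and
`a + b`. The product-to-sum formula `cos (a - b) - cos (a + b) = 2 sin a sin b` turns the right-hand
side into `(2 sin a sin b / (u v))²`, and on the left the factors `p`, `q` cancel. -/

theorem mul_sq_mul_div_sq_mul_div_sq {K : Type*} [Field K] {p q : K} (hp : p ≠ 0) (hq : q ≠ 0)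
    (s t u v : K) : (p * q) ^ 2 * (s / (p * u)) ^ 2 * (t / (q * v)) ^ 2 = (s * t / (u * v)) ^ 2 := by
  rw [← div_mul_div_comm, mul_comm p, mul_comm q, ← div_div, ← div_div]
  field_simp

theorem stmt15_general (x₁ x₂ ξ₁ ξ₂ : ℝ) (h1 : 2 * x₁ > |ξ₂|) :
    4 * (x₁ ^ 2 - ξ₂ ^ 2 / 4) ^ 2 *
        (Real.sin ((x₁ - ξ₂ / 2) * (x₂ + ξ₁ / 2)) / ((x₁ - ξ₂ / 2) * (x₂ + ξ₁ / 2))) ^ 2 *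
        (Real.sin ((x₁ + ξ₂ / 2) * (x₂ - ξ₁ / 2)) / ((x₁ + ξ₂ / 2) * (x₂ - ξ₁ / 2))) ^ 2 =
      ((Real.cos (x₁ * ξ₁ - x₂ * ξ₂) - Real.cos (2 * x₁ * x₂ - ξ₁ * ξ₂ / 2)) /
          (x₂ ^ 2 - ξ₁ ^ 2 / 4)) ^ 2 := by
  obtain ⟨hlt, hgt⟩ := abs_lt.mp h1
  have hp : x₁ - ξ₂ / 2 ≠ 0 := by linarith
  have hq : x₁ + ξ₂ / 2 ≠ 0 := by linarith
  set a := (x₁ - ξ₂ / 2) * (x₂ + ξ₁ / 2)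
  set b := (x₁ + ξ₂ / 2) * (x₂ - ξ₁ / 2)
  have hdiff : x₁ * ξ₁ - x₂ * ξ₂ = a - b := by ring
  have hsum : 2 * x₁ * x₂ - ξ₁ * ξ₂ / 2 = a + b := by ring
  have hpq : x₁ ^ 2 - ξ₂ ^ 2 / 4 = (x₁ - ξ₂ / 2) * (x₁ + ξ₂ / 2) := by ring
  have huv : x₂ ^ 2 - ξ₁ ^ 2 / 4 = (x₂ + ξ₁ / 2) * (x₂ - ξ₁ / 2) := by ring
  rw [hdiff, hsum, ← Real.two_mul_sin_mul_sin, hpq, huv, mul_assoc 4, mul_assoc 4,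
    mul_sq_mul_div_sq_mul_div_sq hp hq]
  ring

/-- Closed form for the Weyl symbol of the covariance operator of the zero-mean Wigner
distribution of Brownian motion:
`σ_W(x₁,x₂,ξ₁,ξ₂) = σ_b(x₁−ξ₂/2, x₂+ξ₁/2)·σ_b(x₁+ξ₂/2, x₂−ξ₁/2)` where
`σ_b(x,ξ) = 2x²(sin(xξ)/(xξ))²`. -/
theorem stmt15 (x₁ x₂ ξ₁ ξ₂ : ℝ) (h1 : 2 * x₁ > |ξ₂|)
    (h2 : x₂ + ξ₁ / 2 ≠ 0) (h3 : x₂ - ξ₁ / 2 ≠ 0) :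
    4 * (x₁ ^ 2 - ξ₂ ^ 2 / 4) ^ 2 *
        (Real.sin ((x₁ - ξ₂ / 2) * (x₂ + ξ₁ / 2)) / ((x₁ - ξ₂ / 2) * (x₂ + ξ₁ / 2))) ^ 2 *
        (Real.sin ((x₁ + ξ₂ / 2) * (x₂ - ξ₁ / 2)) / ((x₁ + ξ₂ / 2) * (x₂ - ξ₁ / 2))) ^ 2 =
      ((Real.cos (x₁ * ξ₁ - x₂ * ξ₂) - Real.cos (2 * x₁ * x₂ - ξ₁ * ξ₂ / 2)) /
          (x₂ ^ 2 - ξ₁ ^ 2 / 4)) ^ 2 :=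
  stmt15_general x₁ x₂ ξ₁ ξ₂ h1
end
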